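/- Let E ⊆ {1,…,n} be an exchangeable random subset (each index is in E independently with probability ε, conditioned on the size constraints) with |E| ≥ k and |{1,…,n}\E| ≥ k almost surely, and let U be a uniform bit independent of E. Define (L₀,L₁) by picking G uniformly among k-subsets of the complement of E and B uniformly among k-subsets of E, and setting (L₀,L₁)=(G,B) if U=0 and (L₀,L₁)=(B,G) if U=1. Then I(U; L₀, L₁) = 0. -/
import Mathlib


open Finset

/-- Shannon entropy (in bits) of a finitely supported pmf. -/
noncomputable def ent {α : Type*} [Fintype α] (p : α → ℝ) : ℝ :=
  -∑ a, p a * Real.logb 2 (p a)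

/-- Distribution of a random variable `X` on a finite weighted space `(Ω, μ)`. -/
noncomputable def pdist {Ω α : Type*} [Fintype Ω] [DecidableEq α]
    (μ : Ω → ℝ) (X : Ω → α) : α → ℝ :=
  fun a => ∑ ω, if X ω = a then μ ω else 0

/-- Entropy (in bits) of a random variable. -/
noncomputable def Hrv {Ω α : Type*} [Fintype Ω] [Fintype α] [DecidableEq α]
    (μ : Ω → ℝ) (X : Ω → α) : ℝ := ent (pdist μ X)

/-- Conditional entropy `H(X | Y)` in bits. -/
noncomputable def condH {Ω α β : Type*} [Fintype Ω] [Fintype α] [Fintype β]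
    [DecidableEq α] [DecidableEq β] (μ : Ω → ℝ) (X : Ω → α) (Y : Ω → β) : ℝ :=
  Hrv μ (fun ω => (X ω, Y ω)) - Hrv μ Y

/-- Mutual information `I(X ; Y)` in bits. -/
noncomputable def MI {Ω α β : Type*} [Fintype Ω] [Fintype α] [Fintype β]
    [DecidableEq α] [DecidableEq β] (μ : Ω → ℝ) (X : Ω → α) (Y : Ω → β) : ℝ :=
  Hrv μ X + Hrv μ Y - Hrv μ (fun ω => (X ω, Y ω))

/-- Conditional mutual information `I(X ; Y | Z)` in bits. -/
noncomputable def condMI {Ω α β γ : Type*} [Fintype Ω] [Fintype α] [Fintype β] [Fintype γ]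
    [DecidableEq α] [DecidableEq β] [DecidableEq γ]
    (μ : Ω → ℝ) (X : Ω → α) (Y : Ω → β) (Z : Ω → γ) : ℝ :=
  Hrv μ (fun ω => (X ω, Z ω)) + Hrv μ (fun ω => (Y ω, Z ω)) - Hrv μ Z
    - Hrv μ (fun ω => (X ω, Y ω, Z ω))

/-- Unnormalized i.i.d.-inclusion weight of an erasure set `E ⊆ {1,…,n}`:
each index lies in `E` independently with probability `ε`. -/
noncomputable def nuE (n : ℕ) (ε : ℝ) (E : Finset (Fin n)) : ℝ :=
  ε ^ E.card * (1 - ε) ^ (n - E.card)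

/-- Normalizing constant for conditioning on `|E| ≥ k` and `n - |E| ≥ k`. -/
noncomputable def ZE (n k : ℕ) (ε : ℝ) : ℝ :=
  ∑ E : Finset (Fin n), if k ≤ E.card ∧ k ≤ n - E.card then nuE n ε E else 0

/-- Joint pmf of `(E, U, G, B)`: the erasure set `E` is an i.i.d.(ε) random
subset conditioned on `|E| ≥ k` and `|Eᶜ| ≥ k`; `U` is an independent uniform
bit; conditionally on `E`, `G` is uniform over `k`-subsets of `Eᶜ` and `B` is
uniform over `k`-subsets of `E`, independent of `U`. -/
noncomputable def muPDT (n k : ℕ) (ε : ℝ) :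
    Finset (Fin n) × Bool × Finset (Fin n) × Finset (Fin n) → ℝ :=
  fun ω =>
    if k ≤ ω.1.card ∧ k ≤ n - ω.1.card ∧ ω.2.2.1 ⊆ ω.1ᶜ ∧ ω.2.2.1.card = k ∧
        ω.2.2.2 ⊆ ω.1 ∧ ω.2.2.2.card = k then
      (nuE n ε ω.1 / ZE n k ε) * (1 / 2) *
        (1 / (Nat.choose (n - ω.1.card) k : ℝ)) * (1 / (Nat.choose ω.1.card k : ℝ))
    else 0

section aux
variable {n k : ℕ} {ε : ℝ}

abbrev Om (n : ℕ) := Finset (Fin n) × Bool × Finset (Fin n) × Finset (Fin n)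

def phi (n : ℕ) (ω : Om n) : Om n :=
  ⟨symmDiff ω.1 (ω.2.2.1 ∪ ω.2.2.2), !ω.2.1, ω.2.2.2, ω.2.2.1⟩

lemma phi_invol (n : ℕ) : Function.Involutive (phi n) := by
  rintro ⟨E, u, g, b⟩
  simp only [phi, Bool.not_not, Prod.mk.injEq, union_comm b g]
  exact ⟨symmDiff_symmDiff_cancel_right (g ∪ b) E, trivial⟩

/-- the support condition -/
def Csupp (n k : ℕ) (ω : Om n) : Prop :=
  k ≤ ω.1.card ∧ k ≤ n - ω.1.card ∧ ω.2.2.1 ⊆ ω.1ᶜ ∧ ω.2.2.1.card = k ∧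
    ω.2.2.2 ⊆ ω.1 ∧ ω.2.2.2.card = k

lemma phi_core {E g b : Finset (Fin n)} (hg : g ⊆ Eᶜ) (hgk : g.card = k)
    (hb : b ⊆ E) (hbk : b.card = k) (hkE : k ≤ E.card) :
    symmDiff E (g ∪ b) = (E \ b) ∪ g ∧ ((E \ b) ∪ g).card = E.card := by
  have h1 : ∀ x, x ∈ g → x ∉ E := fun x hx => (Finset.mem_compl.mp (hg hx))
  have h2 : ∀ x, x ∈ b → x ∈ E := fun x hx => hb hx
  have heq : symmDiff E (g ∪ b) = (E \ b) ∪ g := by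
    ext x
    simp only [symmDiff_def, Finset.sup_eq_union, Finset.mem_union, Finset.mem_sdiff,
      Finset.mem_union]
    have := h1 x; have := h2 x; tauto
  refine ⟨heq, ?_⟩
  have hdisj : Disjoint (E \ b) g := by
    rw [Finset.disjoint_right]
    intro x hxg hxE
    exact h1 x hxg (Finset.mem_sdiff.mp hxE).1
  rw [Finset.card_union_of_disjoint hdisj, Finset.card_sdiff_of_subset hb, hbk, hgk,
    Nat.sub_add_cancel hkE]

lemma csupp_phi {ω : Om n} (h : Csupp n k ω) :
    Csupp n k (phi n ω) ∧ (phi n ω).1.card = ω.1.card := by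
  obtain ⟨E, u, g, b⟩ := ω
  obtain ⟨h1, h2, h3, h4, h5, h6⟩ := h
  obtain ⟨heq, hcard⟩ := phi_core h3 h4 h5 h6 h1
  have hE' : (phi n (E, u, g, b)).1 = (E \ b) ∪ g := heq
  constructor
  · refine ⟨?_, ?_, ?_, h6, ?_, h4⟩
    · rw [hE', hcard]; exact h1
    · rw [hE', hcard]; exact h2
    · rw [hE']
      intro x hx
      rw [Finset.mem_compl, Finset.mem_union, Finset.mem_sdiff]
      push_neg
      exact ⟨fun _ => hx, fun hxg => absurd (h3 hxg) (by simp [h5 hx])⟩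
    · rw [hE']; exact Finset.subset_union_right
  · rw [hE', hcard]

lemma muPDT_phi (ω : Om n) : muPDT n k ε (phi n ω) = muPDT n k ε ω := by
  by_cases h : Csupp n k ω
  · obtain ⟨h', hc⟩ := csupp_phi h
    simp only [Csupp] at h h'
    simp only [muPDT]
    rw [if_pos h', if_pos h]
    simp only [nuE, hc]
  · have h' : ¬ Csupp n k (phi n ω) := by
      intro hc
      have := (csupp_phi hc).1
      rw [phi_invol n ω] at this
      exact h this
    simp only [Csupp] at h h'
    simp only [muPDT]
    rw [if_neg h', if_neg h]
end aux

def Lab (n : ℕ) (ω : Om n) : Finset (Fin n) × Finset (Fin n) :=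
  if ω.2.1 then (ω.2.2.2, ω.2.2.1) else (ω.2.2.1, ω.2.2.2)

section aux2
variable {n k : ℕ} {ε : ℝ}


lemma sum_phi (f : Om n → ℝ) : ∑ ω, f (phi n ω) = ∑ ω, f ω :=
  Fintype.sum_bijective (phi n) (phi_invol n).bijective _ _ (fun _ => rfl)

lemma L_phi (ω : Om n) : Lab n (phi n ω) = Lab n ω := by
  obtain ⟨E, u, g, b⟩ := ω
  cases u <;> rfl

lemma pdist_UL_flip (u : Bool) (l : Finset (Fin n) × Finset (Fin n)) :
    pdist (muPDT n k ε) (fun ω => (ω.2.1, Lab n ω)) (!u, l)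
      = pdist (muPDT n k ε) (fun ω => (ω.2.1, Lab n ω)) (u, l) := by
  unfold pdist
  rw [← sum_phi (fun ω => if (ω.2.1, Lab n ω) = (!u, l) then muPDT n k ε ω else 0)]
  apply Finset.sum_congr rfl
  intro ω _
  rw [muPDT_phi, L_phi]
  have hU : (phi n ω).2.1 = !ω.2.1 := rfl
  rw [hU]
  congr 1
  cases u <;> cases h : ω.2.1 <;> simp [h]

lemma pdist_L_split (l : Finset (Fin n) × Finset (Fin n)) :
    pdist (muPDT n k ε) (Lab n) l
      = pdist (muPDT n k ε) (fun ω => (ω.2.1, Lab n ω)) (false, l)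
        + pdist (muPDT n k ε) (fun ω => (ω.2.1, Lab n ω)) (true, l) := by
  unfold pdist
  rw [← Finset.sum_add_distrib]
  apply Finset.sum_congr rfl
  intro ω _
  cases h : ω.2.1 <;> by_cases hl : Lab n ω = l <;> simp [h, hl]

lemma pdist_UL_half (u : Bool) (l : Finset (Fin n) × Finset (Fin n)) :
    pdist (muPDT n k ε) (fun ω => (ω.2.1, Lab n ω)) (u, l)
      = pdist (muPDT n k ε) (Lab n) l / 2 := by
  have hflip := pdist_UL_flip (n := n) (k := k) (ε := ε) false l
  rw [pdist_L_split]
  cases u <;> simp only [Bool.not_false] at hflip <;> rw [← hflip] <;> ring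

lemma pdist_U_split :
    pdist (muPDT n k ε) (fun ω : Om n => ω.2.1) false
      + pdist (muPDT n k ε) (fun ω : Om n => ω.2.1) true
      = ∑ ω : Om n, muPDT n k ε ω := by
  unfold pdist
  rw [← Finset.sum_add_distrib]
  apply Finset.sum_congr rfl
  intro ω _
  cases h : ω.2.1 <;> simp [h]

lemma pdist_U_flip :
    pdist (muPDT n k ε) (fun ω : Om n => ω.2.1) false
      = pdist (muPDT n k ε) (fun ω : Om n => ω.2.1) true := by
  unfold pdist
  rw [← sum_phi (fun ω : Om n => if ω.2.1 = true then muPDT n k ε ω else 0)]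
  apply Finset.sum_congr rfl
  intro ω _
  rw [muPDT_phi]
  have hU : (phi n ω).2.1 = !ω.2.1 := rfl
  rw [hU]
  cases h : ω.2.1 <;> simp [h]

lemma sum_pdist_L :
    ∑ l : Finset (Fin n) × Finset (Fin n), pdist (muPDT n k ε) (Lab n) l
      = ∑ ω : Om n, muPDT n k ε ω := by
  unfold pdist
  rw [Finset.sum_comm]
  apply Finset.sum_congr rfl
  intro ω _
  simpa using Finset.sum_ite_eq Finset.univ (Lab n ω) (fun _ => muPDT n k ε ω)

end aux2

section aux3
variable {n k : ℕ} {ε : ℝ}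

lemma sum_ite_subsets (k : ℕ) (s : Finset (Fin n)) (x : ℝ) :
    ∑ t : Finset (Fin n), (if t ⊆ s ∧ t.card = k then x else 0)
      = (s.card.choose k : ℝ) * x := by
  classical
  rw [← Finset.sum_filter]
  rw [Finset.sum_const]
  have h : Finset.univ.filter (fun t : Finset (Fin n) => t ⊆ s ∧ t.card = k)
      = s.powersetCard k := by
    ext t; simp [Finset.mem_powersetCard]
  rw [h, Finset.card_powersetCard, nsmul_eq_mul]

lemma ZE_pos (hk : 2 * k ≤ n) (hε : ε ∈ Set.Ioo (0:ℝ) 1) : 0 < ZE n k ε := by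
  have hkn : k ≤ n := by omega
  obtain ⟨E₀, _, hE₀⟩ := Finset.exists_subset_card_eq
    (show k ≤ (Finset.univ : Finset (Fin n)).card by simpa using hkn)
  apply Finset.sum_pos'
  · intro E _
    split
    · exact mul_nonneg (pow_nonneg hε.1.le _) (pow_nonneg (by linarith [hε.2]) _)
    · exact le_refl 0
  · refine ⟨E₀, Finset.mem_univ _, ?_⟩
    rw [if_pos ⟨by omega, by omega⟩]
    exact mul_pos (pow_pos hε.1 _) (pow_pos (by linarith [hε.2]) _)

lemma mass_one (hk : 2 * k ≤ n) (hε : ε ∈ Set.Ioo (0:ℝ) 1) :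
    ∑ ω : Om n, muPDT n k ε ω = 1 := by
  have hZ := ZE_pos hk hε
  rw [Fintype.sum_prod_type]
  have hE : ∀ E : Finset (Fin n),
      (∑ p : Bool × Finset (Fin n) × Finset (Fin n), muPDT n k ε (E, p))
        = if k ≤ E.card ∧ k ≤ n - E.card then nuE n ε E / ZE n k ε else 0 := by
    intro E
    rw [Fintype.sum_prod_type]
    by_cases hE : k ≤ E.card ∧ k ≤ n - E.card
    · have hgb : ∀ u : Bool,
          (∑ p : Finset (Fin n) × Finset (Fin n), muPDT n k ε (E, u, p))
            = nuE n ε E / ZE n k ε * (1/2) := by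
        intro u
        rw [Fintype.sum_prod_type]
        set c : ℝ := (nuE n ε E / ZE n k ε) * (1 / 2) *
          (1 / (Nat.choose (n - E.card) k : ℝ)) * (1 / (Nat.choose E.card k : ℝ)) with hc
        have step : ∀ g : Finset (Fin n),
            (∑ b : Finset (Fin n), muPDT n k ε (E, u, g, b))
              = if g ⊆ Eᶜ ∧ g.card = k then (E.card.choose k : ℝ) * c else 0 := by
          intro g
          by_cases hg : g ⊆ Eᶜ ∧ g.card = k
          · rw [if_pos hg, ← sum_ite_subsets k E c]
            apply Finset.sum_congr rfl
            intro b _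
            by_cases hb : b ⊆ E ∧ b.card = k
            · rw [if_pos hb]
              exact if_pos ⟨hE.1, hE.2, hg.1, hg.2, hb.1, hb.2⟩
            · rw [if_neg hb]
              apply if_neg
              intro hcon
              exact hb ⟨hcon.2.2.2.2.1, hcon.2.2.2.2.2⟩
          · rw [if_neg hg]
            apply Finset.sum_eq_zero
            intro b _
            apply if_neg
            intro hcon
            exact hg ⟨hcon.2.2.1, hcon.2.2.2.1⟩
        rw [Finset.sum_congr rfl (fun g _ => step g), sum_ite_subsets k Eᶜ
          ((E.card.choose k : ℝ) * c)]
        have hcompl : (Eᶜ : Finset (Fin n)).card = n - E.card := by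
          rw [Finset.card_compl, Fintype.card_fin]
        rw [hcompl, hc]
        have h1 : ((n - E.card).choose k : ℝ) ≠ 0 := by
          exact_mod_cast (Nat.choose_pos hE.2).ne'
        have h2 : ((E.card).choose k : ℝ) ≠ 0 := by
          exact_mod_cast (Nat.choose_pos hE.1).ne'
        field_simp
      rw [Fintype.sum_bool, hgb true, hgb false, if_pos hE]
      ring
    · rw [if_neg hE]
      apply Finset.sum_eq_zero; intro u _
      apply Finset.sum_eq_zero; intro g _
      apply if_neg
      intro hcon
      exact hE ⟨hcon.1, hcon.2.1⟩
  rw [Finset.sum_congr rfl (fun E _ => hE E)]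
  have : ∀ E : Finset (Fin n),
      (if k ≤ E.card ∧ k ≤ n - E.card then nuE n ε E / ZE n k ε else 0)
        = (if k ≤ E.card ∧ k ≤ n - E.card then nuE n ε E else 0) / ZE n k ε := by
    intro E; split <;> simp
  rw [Finset.sum_congr rfl (fun E _ => this E), ← Finset.sum_div]
  exact div_self hZ.ne'

end aux3


/-- if `(L₀, L₁) = (G, B)` when `U = 0` and `(L₀, L₁) = (B, G)`
when `U = 1`, then `I(U ; L₀, L₁) = 0`. -/
theorem labels_reveal_nothing (n k : ℕ) (hk : 2 * k ≤ n)
    (ε : ℝ) (hε : ε ∈ Set.Ioo (0:ℝ) 1) :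
    MI (muPDT n k ε)
      (fun ω => ω.2.1)
      (fun ω => if ω.2.1 then (ω.2.2.2, ω.2.2.1) else (ω.2.2.1, ω.2.2.2)) = 0 := by
  have hmass := mass_one hk hε
  set μ := muPDT n k ε with hμ
  have hLab : (fun ω : Om n => if ω.2.1 then (ω.2.2.2, ω.2.2.1) else (ω.2.2.1, ω.2.2.2))
      = Lab n := rfl
  set q : Finset (Fin n) × Finset (Fin n) → ℝ := pdist μ (Lab n) with hq
  -- q sums to 1
  have hqsum : ∑ l, q l = 1 := by rw [hq]; rw [sum_pdist_L]; exact hmass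
  -- marginal of U
  have hU : ∀ u : Bool, pdist μ (fun ω : Om n => ω.2.1) u = 1 / 2 := by
    have h1 := pdist_U_split (n := n) (k := k) (ε := ε)
    have h2 := pdist_U_flip (n := n) (k := k) (ε := ε)
    rw [hmass] at h1
    intro u
    cases u
    · rw [hμ]; linarith
    · rw [hμ]; linarith
  -- joint of (U, L)
  have hUL : ∀ u l, pdist μ (fun ω : Om n => (ω.2.1, Lab n ω)) (u, l) = q l / 2 :=
    fun u l => pdist_UL_half u l
  -- compute the three entropies
  unfold MI Hrv ent
  have HU : -∑ u : Bool, pdist μ (fun ω : Om n => ω.2.1) u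
      * Real.logb 2 (pdist μ (fun ω : Om n => ω.2.1) u) = 1 := by
    simp only [hU, Fintype.sum_bool]
    have : Real.logb 2 (1/2 : ℝ) = -1 := by
      rw [one_div, Real.logb_inv, Real.logb_self_eq_one] <;> norm_num
    rw [this]; norm_num
  have hperl : ∀ l, q l * Real.logb 2 (q l / 2) = q l * Real.logb 2 (q l) - q l := by
    intro l
    by_cases h : q l = 0
    · simp [h]
    · rw [Real.logb_div h two_ne_zero]
      have h2 : Real.logb 2 2 = 1 := Real.logb_self_eq_one (by norm_num)
      rw [h2]; ring
  have HUL : -∑ p : Bool × (Finset (Fin n) × Finset (Fin n)),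
      pdist μ (fun ω : Om n => (ω.2.1, Lab n ω)) p
        * Real.logb 2 (pdist μ (fun ω : Om n => (ω.2.1, Lab n ω)) p)
      = (-∑ l, q l * Real.logb 2 (q l)) + 1 := by
    rw [Fintype.sum_prod_type, Fintype.sum_bool]
    have hb : ∀ u : Bool, ∑ l, pdist μ (fun ω : Om n => (ω.2.1, Lab n ω)) (u, l)
        * Real.logb 2 (pdist μ (fun ω : Om n => (ω.2.1, Lab n ω)) (u, l))
        = ∑ l, (q l / 2) * Real.logb 2 (q l / 2) := by
      intro u
      apply Finset.sum_congr rfl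
      intro l _
      rw [hUL u l]
    rw [hb true, hb false]
    have : ∑ l, (q l / 2) * Real.logb 2 (q l / 2)
        = (∑ l, (q l * Real.logb 2 (q l) - q l)) / 2 := by
      rw [Finset.sum_div]
      apply Finset.sum_congr rfl
      intro l _
      rw [div_mul_eq_mul_div, hperl l]
    rw [this, Finset.sum_sub_distrib, hqsum]
    ring
  rw [hLab] at *
  rw [HU, HUL]
  ring
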